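/- For any μ_1, μ_2 ∈ C[0,1] and σ_1, σ_2 with 0 < σ_1 ≤ σ_2, the L¹ distance between the induced densities satisfies ‖f_{μ_1,σ_1} - f_{μ_2,σ_2}‖_1 ≤ (2/π)^{1/2} ‖μ_1 - μ_2‖_∞ / σ_1 + 3(σ_2 - σ_1)/σ_1. -/

import Mathlib

/-!
`f_{μ,σ}` is the mixture over `x ∈ [0,1]` of the Gaussians `φ_σ(· - μ x)`, so by Minkowski's
integral inequality the L¹ distance of two mixtures is at most the largest L¹ distance between
components `φ_{σ₁}(· - a)` and `φ_{σ₂}(· - b)`, which the triangle inequality splits into a shift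
and a rescaling. For two functions of equal mass, `‖p - q‖₁ = 2 ∫ (p - q)⁺`. For the shift,
`(p - q)⁺` lives on the half-line left of `(a + b)/2` and integrates to the Gaussian mass of an
interval of length `|a - b|`, at most `|a - b| φ_σ(0)`. For the rescaling,
`σ₁ φ_{σ₁} ≤ σ₂ φ_{σ₂}` gives `(φ_{σ₁} - φ_{σ₂})⁺ ≤ (1 - σ₁/σ₂) φ_{σ₁}`.
-/

open MeasureTheory Real Set

/-- The Gaussian density with mean 0 and standard deviation `σ`. -/
noncomputable def phi (σ u : ℝ) : ℝ :=
  (Real.sqrt (2 * Real.pi * σ ^ 2))⁻¹ * Real.exp (-u ^ 2 / (2 * σ ^ 2))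

/-- `f_{μ,σ}(y) = ∫_0^1 φ_σ(y - μ x) dx`. -/
noncomputable def fdens (μ : ℝ → ℝ) (σ y : ℝ) : ℝ :=
  ∫ x in Set.Icc (0:ℝ) 1, phi σ (y - μ x)

section L1Distance

variable {α : Type*} [MeasurableSpace α] {μ : Measure α} {p q : α → ℝ}

theorem integral_abs_sub_eq_two_mul_integral_max (hp : Integrable p μ) (hq : Integrable q μ)
    (hpq : ∫ x, p x ∂μ = ∫ x, q x ∂μ) :
    ∫ x, |p x - q x| ∂μ = 2 * ∫ x, max (p x - q x) 0 ∂μ := by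
  have hd : Integrable (fun x => p x - q x) μ := hp.sub hq
  have habs : ∀ x, |p x - q x| = 2 * max (p x - q x) 0 - (p x - q x) := by
    intro x
    rcases le_total 0 (p x - q x) with h | h
    · rw [abs_of_nonneg h, max_eq_left h]; ring
    · rw [abs_of_nonpos h, max_eq_right h]; ring
  simp_rw [habs]
  rw [integral_sub (hd.pos_part.const_mul 2) hd, integral_const_mul, integral_sub hp hq, hpq,
    sub_self, sub_zero]

theorem integral_abs_sub_le_of_mul_le (hp : Integrable p μ) (hq : Integrable q μ)
    (hpq : ∫ x, p x ∂μ = ∫ x, q x ∂μ) (hp0 : ∀ x, 0 ≤ p x) {r : ℝ} (hr : r ≤ 1)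
    (hrpq : ∀ x, r * p x ≤ q x) :
    ∫ x, |p x - q x| ∂μ ≤ 2 * (1 - r) * ∫ x, p x ∂μ := by
  have hmax : ∀ x, max (p x - q x) 0 ≤ (1 - r) * p x := fun x =>
    max_le (by linarith [hrpq x]) (mul_nonneg (by linarith) (hp0 x))
  rw [integral_abs_sub_eq_two_mul_integral_max hp hq hpq, mul_assoc, ← integral_const_mul (1 - r)]
  exact mul_le_mul_of_nonneg_left (integral_mono (hp.sub hq).pos_part (hp.const_mul _) hmax)
    zero_le_two

end L1Distance

section Minkowski

variable {X Y E : Type*} [MeasurableSpace X] [MeasurableSpace Y] [NormedAddCommGroup E]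
  [NormedSpace ℝ E] {ν : Measure X} {μ : Measure Y} [SFinite μ] {F : X → Y → E}

theorem integral_norm_integral_le_integral_integral_norm [SFinite ν]
    (hF : Integrable (Function.uncurry F) (ν.prod μ)) :
    ∫ y, ‖∫ x, F x y ∂ν‖ ∂μ ≤ ∫ x, ∫ y, ‖F x y‖ ∂μ ∂ν := by
  rw [integral_integral_swap hF.norm]
  exact integral_mono_of_nonneg (.of_forall fun y => norm_nonneg _) hF.norm.integral_prod_right
    (.of_forall fun y => norm_integral_le_integral_norm _)

theorem integral_norm_integral_le_of_integral_norm_le [IsFiniteMeasure ν]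
    (hF : AEStronglyMeasurable (Function.uncurry F) (ν.prod μ))
    (hFx : ∀ᵐ x ∂ν, Integrable (F x) μ) {C : ℝ} (hC : ∀ᵐ x ∂ν, ∫ y, ‖F x y‖ ∂μ ≤ C) :
    ∫ y, ‖∫ x, F x y ∂ν‖ ∂μ ≤ C * ν.real univ := by
  have hint : Integrable (Function.uncurry F) (ν.prod μ) := by
    refine (integrable_prod_iff hF).2
      ⟨hFx, (integrable_const C).mono' hF.norm.integral_prod_right' ?_⟩
    filter_upwards [hC] with x hx
    rwa [Real.norm_of_nonneg (integral_nonneg fun y => norm_nonneg _)]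
  calc ∫ y, ‖∫ x, F x y ∂ν‖ ∂μ ≤ ∫ x, ∫ y, ‖F x y‖ ∂μ ∂ν :=
        integral_norm_integral_le_integral_integral_norm hint
    _ ≤ ∫ _, C ∂ν := integral_mono_ae hint.integral_norm_prod_left (integrable_const C) hC
    _ = C * ν.real univ := by rw [integral_const, smul_eq_mul, mul_comm]

end Minkowski

section Gaussian

variable {σ σ1 σ2 : ℝ}

theorem phi_eq_gaussianPDFReal (σ : ℝ) :
    phi σ = ProbabilityTheory.gaussianPDFReal 0 (σ ^ 2).toNNReal := by
  ext u
  simp [phi, ProbabilityTheory.gaussianPDFReal, Real.coe_toNNReal _ (sq_nonneg σ)]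

theorem phi_nonneg (σ u : ℝ) : 0 ≤ phi σ u := by
  rw [phi_eq_gaussianPDFReal]
  exact ProbabilityTheory.gaussianPDFReal_nonneg _ _ _

theorem continuous_phi (σ : ℝ) : Continuous (phi σ) := by
  unfold phi
  fun_prop

theorem integrable_phi (σ : ℝ) : Integrable (phi σ) := by
  rw [phi_eq_gaussianPDFReal]
  exact ProbabilityTheory.integrable_gaussianPDFReal _ _

theorem integral_phi (hσ : σ ≠ 0) : ∫ u, phi σ u = 1 := by
  rw [phi_eq_gaussianPDFReal]
  exact ProbabilityTheory.integral_gaussianPDFReal_eq_one _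
    (Real.toNNReal_pos.2 (by positivity)).ne'

theorem phi_le_phi_of_sq_le {u v : ℝ} (h : u ^ 2 ≤ v ^ 2) : phi σ v ≤ phi σ u := by
  unfold phi
  gcongr

theorem phi_le_phi_zero (u : ℝ) : phi σ u ≤ phi σ 0 :=
  phi_le_phi_of_sq_le (by simpa using sq_nonneg u)

theorem two_mul_phi_zero (hσ : 0 ≤ σ) : 2 * phi σ 0 = √(2 / π) / σ := by
  have h2 : √(2 / π) = 2 / √(2 * π) := by
    rw [eq_div_iff (by positivity), ← sqrt_mul (by positivity),
      show 2 / π * (2 * π) = 2 ^ 2 by field_simp, sqrt_sq zero_le_two]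
  rw [phi, sqrt_mul (by positivity), sqrt_sq hσ, h2]
  norm_num
  field_simp

theorem mul_phi (hσ : 0 < σ) (u : ℝ) :
    σ * phi σ u = exp (-u ^ 2 / (2 * σ ^ 2)) / √(2 * π) := by
  rw [phi, sqrt_mul (by positivity), sqrt_sq hσ.le]
  field_simp

theorem mul_phi_le_mul_phi (hσ1 : 0 < σ1) (h12 : σ1 ≤ σ2) (u : ℝ) :
    σ1 * phi σ1 u ≤ σ2 * phi σ2 u := by
  rw [mul_phi hσ1, mul_phi (hσ1.trans_le h12)]
  gcongr ?_ / _
  rw [exp_le_exp, neg_div, neg_div, neg_le_neg_iff]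
  gcongr

end Gaussian

section GaussianL1

variable {σ σ1 σ2 : ℝ}

theorem setIntegral_Iic_comp_sub_right {E : Type*} [NormedAddCommGroup E] [NormedSpace ℝ E]
    (f : ℝ → E) (c a : ℝ) : ∫ y in Iic c, f (y - a) = ∫ y in Iic (c - a), f y := by
  simpa [preimage_sub_const_Iic] using
    (measurePreserving_sub_right volume a).setIntegral_preimage_emb
      (measurableEmbedding_subRight a) f (Iic (c - a))

theorem integral_max_phi_comp_sub_sub_le {a b : ℝ} (hab : a ≤ b) (σ : ℝ) :
    ∫ y, max (phi σ (y - a) - phi σ (y - b)) 0 ≤ (b - a) * phi σ 0 := by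
  set m := (a + b) / 2 with hm
  have hint := integrable_phi σ
  have hmax : ∀ y, max (phi σ (y - a) - phi σ (y - b)) 0 =
      (Iic m).indicator (fun y => phi σ (y - a) - phi σ (y - b)) y := by
    intro y
    by_cases hy : y ≤ m
    · have hsq : (y - a) ^ 2 ≤ (y - b) ^ 2 := by
        nlinarith [mul_nonneg (sub_nonneg.2 hab) (sub_nonneg.2 hy)]
      rw [indicator_of_mem (mem_Iic.2 hy), max_eq_left (sub_nonneg.2 (phi_le_phi_of_sq_le hsq))]
    · have hsq : (y - b) ^ 2 ≤ (y - a) ^ 2 := by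
        nlinarith [mul_nonneg (sub_nonneg.2 hab) (sub_nonneg.2 (not_le.1 hy).le)]
      rw [indicator_of_notMem (mt mem_Iic.1 hy),
        max_eq_right (sub_nonpos.2 (phi_le_phi_of_sq_le hsq))]
  calc ∫ y, max (phi σ (y - a) - phi σ (y - b)) 0
      = ∫ y in Iic m, (phi σ (y - a) - phi σ (y - b)) := by
        simp_rw [hmax]
        exact integral_indicator measurableSet_Iic
    _ = ∫ y in (m - b)..(m - a), phi σ y := by
        rw [integral_sub (hint.comp_sub_right a).integrableOn (hint.comp_sub_right b).integrableOn,
          setIntegral_Iic_comp_sub_right, setIntegral_Iic_comp_sub_right,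
          intervalIntegral.integral_Iic_sub_Iic hint.integrableOn hint.integrableOn]
    _ ≤ ∫ _ in (m - b)..(m - a), phi σ 0 :=
        intervalIntegral.integral_mono_on (by linarith) hint.intervalIntegrable
          intervalIntegrable_const fun y _ => phi_le_phi_zero y
    _ = (b - a) * phi σ 0 := by
        rw [intervalIntegral.integral_const, smul_eq_mul]
        ring

theorem integral_abs_phi_comp_sub_sub_le_of_le (hσ : 0 < σ) {a b : ℝ} (hab : a ≤ b) :
    ∫ y, |phi σ (y - a) - phi σ (y - b)| ≤ √(2 / π) * (b - a) / σ := by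
  have hint := integrable_phi σ
  rw [integral_abs_sub_eq_two_mul_integral_max (hint.comp_sub_right a) (hint.comp_sub_right b)
    (by rw [integral_sub_right_eq_self, integral_sub_right_eq_self])]
  calc 2 * ∫ y, max (phi σ (y - a) - phi σ (y - b)) 0 ≤ 2 * ((b - a) * phi σ 0) := by
        gcongr
        exact integral_max_phi_comp_sub_sub_le hab σ
    _ = √(2 / π) * (b - a) / σ := by
        rw [mul_left_comm, two_mul_phi_zero hσ.le]
        ring

theorem integral_abs_phi_comp_sub_sub_le (hσ : 0 < σ) (a b : ℝ) :
    ∫ y, |phi σ (y - a) - phi σ (y - b)| ≤ √(2 / π) * |a - b| / σ := by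
  rcases le_total a b with hab | hab
  · rw [abs_sub_comm, abs_of_nonneg (sub_nonneg.2 hab)]
    exact integral_abs_phi_comp_sub_sub_le_of_le hσ hab
  · simp_rw [abs_sub_comm (phi σ (_ - a))]
    rw [abs_of_nonneg (sub_nonneg.2 hab)]
    exact integral_abs_phi_comp_sub_sub_le_of_le hσ hab

theorem integral_abs_phi_sub_phi_le (hσ1 : 0 < σ1) (h12 : σ1 ≤ σ2) :
    ∫ u, |phi σ1 u - phi σ2 u| ≤ 2 * (σ2 - σ1) / σ2 := by
  have hσ2 := hσ1.trans_le h12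
  have hscale : ∀ u, σ1 / σ2 * phi σ1 u ≤ phi σ2 u := fun u => by
    rw [div_mul_eq_mul_div, div_le_iff₀ hσ2, mul_comm _ σ2]
    exact mul_phi_le_mul_phi hσ1 h12 u
  calc ∫ u, |phi σ1 u - phi σ2 u| ≤ 2 * (1 - σ1 / σ2) * ∫ u, phi σ1 u :=
        integral_abs_sub_le_of_mul_le (integrable_phi σ1) (integrable_phi σ2)
          (by rw [integral_phi hσ1.ne', integral_phi hσ2.ne']) (phi_nonneg σ1)
          ((div_le_one hσ2).2 h12) hscale
    _ = 2 * (σ2 - σ1) / σ2 := by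
        rw [integral_phi hσ1.ne']
        field_simp

theorem integral_abs_phi_comp_sub_sub_phi_comp_sub_le (hσ1 : 0 < σ1) (h12 : σ1 ≤ σ2) (a b : ℝ) :
    ∫ y, |phi σ1 (y - a) - phi σ2 (y - b)| ≤ √(2 / π) * |a - b| / σ1 + 3 * (σ2 - σ1) / σ1 := by
  have hi1 := (integrable_phi σ1).comp_sub_right a
  have hi2 := (integrable_phi σ1).comp_sub_right b
  have hi3 := (integrable_phi σ2).comp_sub_right b
  have hshift : Integrable fun y => |phi σ1 (y - a) - phi σ1 (y - b)| := (hi1.sub hi2).abs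
  have hscale : Integrable fun y => |phi σ1 (y - b) - phi σ2 (y - b)| := (hi2.sub hi3).abs
  have hconst : 2 * (σ2 - σ1) / σ2 ≤ 3 * (σ2 - σ1) / σ1 := by
    rw [div_le_div_iff₀ (hσ1.trans_le h12) hσ1]
    nlinarith
  calc ∫ y, |phi σ1 (y - a) - phi σ2 (y - b)|
      ≤ ∫ y, (|phi σ1 (y - a) - phi σ1 (y - b)| + |phi σ1 (y - b) - phi σ2 (y - b)|) :=
        integral_mono (hi1.sub hi3).abs (hshift.add hscale)
          fun y => abs_sub_le _ _ _
    _ = (∫ y, |phi σ1 (y - a) - phi σ1 (y - b)|) + ∫ u, |phi σ1 u - phi σ2 u| := by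
        rw [integral_add hshift hscale,
          integral_sub_right_eq_self (fun u => |phi σ1 u - phi σ2 u|) b]
    _ ≤ √(2 / π) * |a - b| / σ1 + 3 * (σ2 - σ1) / σ1 :=
        add_le_add (integral_abs_phi_comp_sub_sub_le hσ1 a b)
          ((integral_abs_phi_sub_phi_le hσ1 h12).trans hconst)

end GaussianL1

section Mixture

variable {X : Type*} [MeasurableSpace X] {ν : Measure X} {μ : X → ℝ}

theorem integrable_phi_sub_comp [IsFiniteMeasure ν] (hμ : AEStronglyMeasurable μ ν) (σ y : ℝ) :
    Integrable (fun x => phi σ (y - μ x)) ν :=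
  .of_bound ((continuous_phi σ).comp_aestronglyMeasurable (aestronglyMeasurable_const.sub hμ))
    (phi σ 0) (.of_forall fun x => by rw [norm_of_nonneg (phi_nonneg _ _)]; exact phi_le_phi_zero _)

theorem aestronglyMeasurable_phi_snd_sub_comp_fst (hμ : AEStronglyMeasurable μ ν) (σ : ℝ) :
    AEStronglyMeasurable (fun z : X × ℝ => phi σ (z.2 - μ z.1)) (ν.prod volume) :=
  (continuous_phi σ).comp_aestronglyMeasurable
    (measurable_snd.aestronglyMeasurable.sub hμ.comp_fst)

end Mixture

/-- L¹ bound: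
`‖f_{μ₁,σ₁} - f_{μ₂,σ₂}‖₁ ≤ √(2/π) ‖μ₁-μ₂‖_∞/σ₁ + 3(σ₂-σ₁)/σ₁`
for `0 < σ₁ ≤ σ₂`, where `M` is any sup-norm bound on `μ₁ - μ₂` over `[0,1]`. -/
theorem L1_dist_fdens_le
    (μ1 μ2 : ℝ → ℝ)
    (h1 : ContinuousOn μ1 (Set.Icc 0 1)) (h2 : ContinuousOn μ2 (Set.Icc 0 1))
    (σ1 σ2 : ℝ) (hσ1 : 0 < σ1) (hσ12 : σ1 ≤ σ2)
    (M : ℝ) (hM : ∀ x ∈ Set.Icc (0:ℝ) 1, |μ1 x - μ2 x| ≤ M) :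
    (∫ y, |fdens μ1 σ1 y - fdens μ2 σ2 y|) ≤
      Real.sqrt (2 / Real.pi) * M / σ1 + 3 * (σ2 - σ1) / σ1 := by
  set ν := volume.restrict (Icc (0:ℝ) 1)
  have hμ1 : AEStronglyMeasurable μ1 ν := h1.aestronglyMeasurable measurableSet_Icc
  have hμ2 : AEStronglyMeasurable μ2 ν := h2.aestronglyMeasurable measurableSet_Icc
  have hslice : ∀ᵐ x ∂ν, ∫ y, ‖phi σ1 (y - μ1 x) - phi σ2 (y - μ2 x)‖ ≤
      √(2 / π) * M / σ1 + 3 * (σ2 - σ1) / σ1 := by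
    refine ae_restrict_of_forall_mem measurableSet_Icc fun x hx => ?_
    simp_rw [Real.norm_eq_abs]
    refine (integral_abs_phi_comp_sub_sub_phi_comp_sub_le hσ1 hσ12 _ _).trans ?_
    gcongr
    exact hM x hx
  calc ∫ y, |fdens μ1 σ1 y - fdens μ2 σ2 y|
      = ∫ y, ‖∫ x, (phi σ1 (y - μ1 x) - phi σ2 (y - μ2 x)) ∂ν‖ := by
        simp_rw [Real.norm_eq_abs, integral_sub (integrable_phi_sub_comp hμ1 σ1 _)
          (integrable_phi_sub_comp hμ2 σ2 _)]
        rfl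
    _ ≤ (√(2 / π) * M / σ1 + 3 * (σ2 - σ1) / σ1) * ν.real univ :=
        integral_norm_integral_le_of_integral_norm_le
          ((aestronglyMeasurable_phi_snd_sub_comp_fst hμ1 σ1).sub
            (aestronglyMeasurable_phi_snd_sub_comp_fst hμ2 σ2))
          (.of_forall fun x => ((integrable_phi σ1).comp_sub_right _).sub
            ((integrable_phi σ2).comp_sub_right _)) hslice
    _ = √(2 / π) * M / σ1 + 3 * (σ2 - σ1) / σ1 := by simp [ν]
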